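/- H¹(I) is contained in H^{1/2,∞}(I) with continuous inclusion: there exists C > 0 such that ‖v‖_{1/2,∞} ≤ C ‖v‖_{H¹(I)} for every v ∈ H¹(I). -/

import Mathlib

open MeasureTheory Set Polynomial

/-! Common definitions: Lebesgue/Sobolev norms on `I = (0,1)`, finite element
spaces on the uniform dyadic grid `T_L`, the singularly perturbed problem
`-δ²u'' + cu = f`, and (Q)TT decompositions of vectors in `ℝ^{2^L}`. -/

/-- Squared `L²(0,1)` norm. -/
noncomputable def L2sq (v : ℝ → ℝ) : ℝ := ∫ x in Ioo (0:ℝ) 1, (v x)^2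

/-- `L²(0,1)` norm. -/
noncomputable def L2norm (v : ℝ → ℝ) : ℝ := Real.sqrt (L2sq v)

/-- `H¹(0,1)` norm of a function `v` with derivative `v'`. -/
noncomputable def H1norm (v v' : ℝ → ℝ) : ℝ := Real.sqrt (L2sq v + L2sq v')

/-- `H²(0,1)` norm of a function `v` with derivatives `v'`, `v''`. -/
noncomputable def H2norm (v v' v'' : ℝ → ℝ) : ℝ := Real.sqrt (L2sq v + L2sq v' + L2sq v'')

/-- Energy norm `‖v‖_δ = (δ²‖v'‖² + ‖v‖²)^(1/2)`. -/
noncomputable def energyNorm (δ : ℝ) (v v' : ℝ → ℝ) : ℝ := Real.sqrt (δ^2 * L2sq v' + L2sq v)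

/-- Membership in `L²(0,1)`. -/
def MemL2 (v : ℝ → ℝ) : Prop := IntegrableOn (fun x => (v x)^2) (Ioo (0:ℝ) 1)

/-- `v ∈ H¹(0,1)` with (weak) derivative `v'`: `v` is absolutely continuous on `[0,1]`
(the fundamental theorem of calculus holds with density `v'`) and `v, v' ∈ L²(0,1)`. -/
def IsH1 (v v' : ℝ → ℝ) : Prop :=
  (∀ x ∈ Icc (0:ℝ) 1, v x = v 0 + ∫ t in (0:ℝ)..x, v' t) ∧
  ContinuousOn v (Icc (0:ℝ) 1) ∧ MemL2 v ∧ MemL2 v'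

/-- `v ∈ H²(0,1)` with derivatives `v'` and `v''`. -/
def IsH2 (v v' v'' : ℝ → ℝ) : Prop := IsH1 v v' ∧ IsH1 v' v''

/-- The bilinear form `a_δ(u,v) = ∫_I (δ² u'v' + c u v)`. -/
noncomputable def aForm (δ : ℝ) (c : ℝ → ℝ) (u u' v v' : ℝ → ℝ) : ℝ :=
  ∫ x in Ioo (0:ℝ) 1, (δ^2 * u' x * v' x + c x * u x * v x)

/-- Mesh width `h = 1/(2^L+1)` of the uniform grid `T_L`. -/
noncomputable def gridh (L : ℕ) : ℝ := 1 / (2^L + 1)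

/-- Continuous, piecewise affine functions on the uniform grid `T_L`
with nodes `x_j = j·h`, `j = 0,…,2^L+1`. -/
def PL (L : ℕ) (w : ℝ → ℝ) : Prop :=
  ContinuousOn w (Icc (0:ℝ) 1) ∧
  ∀ j : ℕ, j < 2^L + 1 →
    ∃ a b : ℝ, ∀ x ∈ Icc ((j:ℝ) * gridh L) (((j:ℝ)+1) * gridh L), w x = a * x + b

/-- `V^L₀`: continuous piecewise affine on `T_L`, vanishing at the endpoints. -/
def PL0 (L : ℕ) (w : ℝ → ℝ) : Prop := PL L w ∧ w 0 = 0 ∧ w 1 = 0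

/-- `V^L` with boundary values `α₀`, `α₁`. -/
def MemVL (L : ℕ) (α₀ α₁ : ℝ) (w : ℝ → ℝ) : Prop := PL L w ∧ w 0 = α₀ ∧ w 1 = α₁

/-- The Lagrange hat function at node `x_i = i·h` of the grid `T_L`. -/
noncomputable def hat (L : ℕ) (i : ℕ) (x : ℝ) : ℝ :=
  max 0 (1 - |x - (i:ℝ) * gridh L| / gridh L)

/-- Membership in `V(I, p, T^hp_κ)`: continuous on `[0,1]`, a polynomial of degree `≤ p`
on each of the three subintervals of the grid `{0, min(1/4,κ), 1-min(1/4,κ), 1}`,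
with boundary values `α₀`, `α₁`. -/
def MemVhp (p : ℕ) (κ α₀ α₁ : ℝ) (v : ℝ → ℝ) : Prop :=
  ContinuousOn v (Icc (0:ℝ) 1) ∧ v 0 = α₀ ∧ v 1 = α₁ ∧
  ∃ P₁ P₂ P₃ : Polynomial ℝ,
    P₁.natDegree ≤ p ∧ P₂.natDegree ≤ p ∧ P₃.natDegree ≤ p ∧
    (∀ x ∈ Icc (0:ℝ) (min (1/4) κ), v x = P₁.eval x) ∧
    (∀ x ∈ Icc (min (1/4) κ) (1 - min (1/4) κ), v x = P₂.eval x) ∧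
    (∀ x ∈ Icc (1 - min (1/4) κ) 1, v x = P₃.eval x)

/-- Weak solution `u ∈ H¹(0,1)` (with weak derivative `u'`) of
`-δ²u'' + cu = f` in `(0,1)`, `u(0) = α₀`, `u(1) = α₁`. -/
def WeakSol (δ : ℝ) (c f : ℝ → ℝ) (α₀ α₁ : ℝ) (u u' : ℝ → ℝ) : Prop :=
  IsH1 u u' ∧ u 0 = α₀ ∧ u 1 = α₁ ∧
  ∀ v v' : ℝ → ℝ, IsH1 v v' → v 0 = 0 → v 1 = 0 →
    aForm δ c u u' v v' = ∫ x in Ioo (0:ℝ) 1, f x * v x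

/-- Strong solution `u ∈ H²(0,1)` with homogeneous Dirichlet boundary conditions:
`-δ²u'' + c u = f` a.e. in `(0,1)`, `u(0)=u(1)=0`. -/
def StrongSol0 (δ : ℝ) (c f : ℝ → ℝ) (u u' u'' : ℝ → ℝ) : Prop :=
  IsH2 u u' u'' ∧ u 0 = 0 ∧ u 1 = 0 ∧
  ∀ᵐ x ∂(volume.restrict (Ioo (0:ℝ) 1)), -δ^2 * u'' x + c x * u x = f x

/-- `Pv` (with derivative `Pv'`) is the Galerkin projection of `v` (with derivative `v'`)
onto `V^L₀`: `Pv ∈ V^L₀` and `a_δ(Pv - v, w) = 0` for all `w ∈ V^L₀`. -/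
def IsGalerkin0 (δ : ℝ) (c : ℝ → ℝ) (L : ℕ) (v v' Pv Pv' : ℝ → ℝ) : Prop :=
  PL0 L Pv ∧ IsH1 Pv Pv' ∧
  ∀ w w' : ℝ → ℝ, PL0 L w → IsH1 w w' →
    aForm δ c (fun x => Pv x - v x) (fun x => Pv' x - v' x) w w' = 0

/-- The `K`-functional between `L²(0,1)` and `H¹₀(0,1)`:
`K(t,v) = inf {‖v₀‖_{L²} + t‖v₁‖_{H¹} : v = v₀ + v₁, v₀ ∈ L², v₁ ∈ H¹₀}`. -/
noncomputable def Kfun (t : ℝ) (v : ℝ → ℝ) : ℝ :=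
  sInf {s : ℝ | ∃ v₀ v₁ v₁' : ℝ → ℝ, (∀ x, v x = v₀ x + v₁ x) ∧ MemL2 v₀ ∧
    IsH1 v₁ v₁' ∧ v₁ 0 = 0 ∧ v₁ 1 = 0 ∧ s = L2norm v₀ + t * H1norm v₁ v₁'}

/-- The set `{K(t,v)/√t : t > 0}` over which the `H^{1/2,∞}` norm is taken. -/
def HhalfSet (v : ℝ → ℝ) : Set ℝ := {s : ℝ | ∃ t : ℝ, 0 < t ∧ s = Kfun t v / Real.sqrt t}

/-- The interpolation norm `‖v‖_{1/2,∞} = sup_{t>0} K(t,v)/t^{1/2}`. -/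
noncomputable def HhalfNorm (v : ℝ → ℝ) : ℝ := sSup (HhalfSet v)

/-- `v ∈ H^{1/2,∞}(0,1)`: the sup defining `‖v‖_{1/2,∞}` is finite. -/
def MemHhalf (v : ℝ → ℝ) : Prop := BddAbove (HhalfSet v)

/-- Partial products `V¹(i₁)⋯Vⁿ(iₙ)` of TT-cores. -/
def qttEntry {rk : ℕ → ℕ}
    (V : ∀ j : ℕ, Fin 2 → Matrix (Fin (rk j)) (Fin (rk (j+1))) ℝ) :
    (n : ℕ) → (Fin n → Fin 2) → Matrix (Fin (rk 0)) (Fin (rk n)) ℝ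
  | 0, _ => 1
  | n+1, i => qttEntry V n (fun j => i j.castSucc) * V n (i (Fin.last n))

/-- The binary digits `i_1,…,i_L` of an index `i = Σ_{j=1}^L 2^{L-j} i_j`. -/
def bits (L : ℕ) (i : ℕ) : Fin L → Fin 2 :=
  fun j => ⟨i / 2^(L - 1 - (j:ℕ)) % 2, Nat.mod_lt _ (by norm_num)⟩

/-- `u ∈ ℝ^{2^L}` admits a QTT decomposition with rank sequence `rk`
(`rk 0 = rk L = 1`): `u(i) = V¹(i₁)⋯V^L(i_L)` for all indices `i`. -/
def HasQTTRanks (L : ℕ) (u : Fin (2^L) → ℝ) (rk : ℕ → ℕ) : Prop :=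
  rk 0 = 1 ∧ rk L = 1 ∧
  ∃ V : ∀ j : ℕ, Fin 2 → Matrix (Fin (rk j)) (Fin (rk (j+1))) ℝ,
    ∀ (i : Fin (2^L)) (a : Fin (rk 0)) (b : Fin (rk L)),
      u i = qttEntry V L (bits L (i:ℕ)) a b

/-- `u ∈ ℝ^{2^L}` admits a QTT decomposition with all ranks `r_1,…,r_{L-1}` bounded by `r`. -/
def HasQTT (L : ℕ) (u : Fin (2^L) → ℝ) (r : ℕ) : Prop :=
  ∃ rk : ℕ → ℕ, HasQTTRanks L u rk ∧ ∀ j : ℕ, 0 < j → j < L → rk j ≤ r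

/-- Number of parameters `Σ_{j=1}^L r_{j-1}·2·r_j` of a QTT decomposition with ranks `rk`. -/
def Ndof (L : ℕ) (rk : ℕ → ℕ) : ℕ := ∑ j ∈ Finset.range L, rk j * 2 * rk (j+1)

/-- Partial products of matrix (operator) TT-cores. -/
def qttEntryM {rk : ℕ → ℕ}
    (V : ∀ j : ℕ, Fin 2 → Fin 2 → Matrix (Fin (rk j)) (Fin (rk (j+1))) ℝ) :
    (n : ℕ) → (Fin n → Fin 2) → (Fin n → Fin 2) → Matrix (Fin (rk 0)) (Fin (rk n)) ℝ
  | 0, _, _ => 1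
  | n+1, i, m =>
      qttEntryM V n (fun j => i j.castSucc) (fun j => m j.castSucc) *
        V n (i (Fin.last n)) (m (Fin.last n))

/-- A matrix `A ∈ ℝ^{2^L × 2^L}` admits a matrix QTT decomposition with rank sequence `rk`:
`A(i,m) = V¹(i₁,m₁)⋯V^L(i_L,m_L)`. -/
def HasMatrixQTTRanks (L : ℕ) (A : Matrix (Fin (2^L)) (Fin (2^L)) ℝ) (rk : ℕ → ℕ) : Prop :=
  rk 0 = 1 ∧ rk L = 1 ∧
  ∃ V : ∀ j : ℕ, Fin 2 → Fin 2 → Matrix (Fin (rk j)) (Fin (rk (j+1))) ℝ,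
    ∀ (i m : Fin (2^L)) (a : Fin (rk 0)) (b : Fin (rk L)),
      A i m = qttEntryM V L (bits L (i:ℕ)) (bits L (m:ℕ)) a b

/-! We show `K(t, v) ≤ 13 ‖v‖_{H¹} √t` for all `t > 0`. For `t > 1` the splitting `v₁ = 0`
suffices. For `t ≤ 1` we subtract from `v` the lift `g = v(0)(1-x)^(n+1) + v(1)x^(n+1)` of its
boundary values, with `n + 1 ≈ 1/t`: it lives in a boundary layer of width `≈ t`, so
`‖g‖ ≲ √t (|v(0)| + |v(1)|)` and `‖g'‖ ≲ (|v(0)| + |v(1)|) / √t`, while `|v(0)|, |v(1)| ≤ 2‖v‖_{H¹}`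
by the one-dimensional trace inequality. Then `v = g + (v - g)` with `v - g ∈ H¹₀` is the required
splitting. -/

instance : IsProbabilityMeasure (volume.restrict (Ioo (0:ℝ) 1)) :=
  ⟨by simp⟩

lemma L2sq_nonneg (f : ℝ → ℝ) : 0 ≤ L2sq f :=
  integral_nonneg fun _ => sq_nonneg _

lemma L2norm_le_H1norm (f f' : ℝ → ℝ) : L2norm f ≤ H1norm f f' :=
  Real.sqrt_le_sqrt (le_add_of_nonneg_right (L2sq_nonneg f'))

lemma L2norm_deriv_le_H1norm (f f' : ℝ → ℝ) : L2norm f' ≤ H1norm f f' :=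
  Real.sqrt_le_sqrt (le_add_of_nonneg_left (L2sq_nonneg f))

lemma L2sq_const_mul (c : ℝ) (f : ℝ → ℝ) : L2sq (fun x => c * f x) = c ^ 2 * L2sq f := by
  simp only [L2sq, mul_pow, integral_const_mul]

lemma L2sq_comp_one_sub (f : ℝ → ℝ) : L2sq (fun x => f (1 - x)) = L2sq f := by
  simp only [L2sq, ← integral_Ioc_eq_integral_Ioo, ← intervalIntegral.integral_of_le zero_le_one]
  simpa using intervalIntegral.integral_comp_sub_left (fun x => f x ^ 2) (a := 0) (b := 1) 1

lemma L2sq_pow (n : ℕ) : L2sq (fun x => x ^ n) = 1 / (2 * n + 1) := by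
  simp only [L2sq, ← integral_Ioc_eq_integral_Ioo, ← intervalIntegral.integral_of_le zero_le_one,
    ← pow_mul, integral_pow]
  push_cast
  ring_nf

lemma memL2_iff_memLp {f : ℝ → ℝ} (hf : AEStronglyMeasurable f (volume.restrict (Ioo 0 1))) :
    MemL2 f ↔ MemLp f 2 (volume.restrict (Ioo 0 1)) :=
  (memLp_two_iff_integrable_sq hf).symm

lemma memL2_of_continuousOn {f : ℝ → ℝ} (hf : ContinuousOn f (Icc 0 1)) : MemL2 f :=
  ((hf.pow 2).integrableOn_Icc).mono_set Ioo_subset_Icc_self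

lemma MemL2.of_abs_le {f g : ℝ → ℝ} (hg : MemL2 g)
    (hf : AEStronglyMeasurable f (volume.restrict (Ioo 0 1))) (h : ∀ x, |f x| ≤ |g x|) :
    MemL2 f :=
  Integrable.mono' hg (hf.pow 2) (ae_of_all _ fun x => by
    rw [Real.norm_eq_abs, abs_of_nonneg (sq_nonneg _)]
    exact sq_le_sq.2 (h x))

lemma MemL2.sub {f g : ℝ → ℝ} (hf : MemL2 f) (hg : MemL2 g)
    (hfm : AEStronglyMeasurable f (volume.restrict (Ioo 0 1)))
    (hgm : AEStronglyMeasurable g (volume.restrict (Ioo 0 1))) : MemL2 fun x => f x - g x :=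
  (memL2_iff_memLp (hfm.sub hgm)).2 (((memL2_iff_memLp hfm).1 hf).sub ((memL2_iff_memLp hgm).1 hg))

lemma MemL2.integrableOn {f : ℝ → ℝ} (hf : MemL2 f) {s : Set ℝ} (hs : s ⊆ Ioo 0 1)
    (hm : AEStronglyMeasurable f (volume.restrict s)) : IntegrableOn f s := by
  have hLp : MemLp f 2 (volume.restrict s) :=
    (memLp_two_iff_integrable_sq hm).2 (hf.mono_set hs)
  have : IsFiniteMeasure (volume.restrict s) :=
    isFiniteMeasure_restrict.2 ((measure_mono hs).trans_lt measure_Ioo_lt_top).ne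
  exact hLp.integrable one_le_two

lemma L2sq_le_of_abs_le {f g : ℝ → ℝ} (hg : MemL2 g) (h : ∀ x, |f x| ≤ |g x|) :
    L2sq f ≤ L2sq g :=
  integral_mono_of_nonneg (ae_of_all _ fun _ => sq_nonneg _) hg
    (ae_of_all _ fun x => sq_le_sq.2 (h x))

lemma L2sq_add_le {f g : ℝ → ℝ} (hf : MemL2 f) (hg : MemL2 g) :
    L2sq (fun x => f x + g x) ≤ 2 * L2sq f + 2 * L2sq g := by
  rw [L2sq, L2sq, L2sq, ← integral_const_mul, ← integral_const_mul,
    ← integral_add (hf.const_mul 2) (hg.const_mul 2)]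
  exact integral_mono_of_nonneg (ae_of_all _ fun _ => sq_nonneg _)
    ((hf.const_mul 2).add (hg.const_mul 2))
    (ae_of_all _ fun x => by nlinarith [sq_nonneg (f x - g x)])

lemma L2sq_sub_le {f g : ℝ → ℝ} (hf : MemL2 f) (hg : MemL2 g) :
    L2sq (fun x => f x - g x) ≤ 2 * L2sq f + 2 * L2sq g := by
  have hg' : MemL2 fun x => -g x := by simpa [MemL2] using hg
  simpa [sub_eq_add_neg, L2sq] using L2sq_add_le hf hg'

lemma integral_abs_le_L2norm {f : ℝ → ℝ} (hf : IntegrableOn f (Ioo 0 1)) (hf2 : MemL2 f) :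
    ∫ x in Ioo (0:ℝ) 1, |f x| ≤ L2norm f := by
  have hLp : MemLp (fun x => |f x|) 2 (volume.restrict (Ioo 0 1)) :=
    ((memL2_iff_memLp hf.1).1 hf2).abs
  have hvar := ProbabilityTheory.variance_nonneg (fun x => |f x|) (volume.restrict (Ioo (0:ℝ) 1))
  rw [ProbabilityTheory.variance_eq_sub hLp] at hvar
  simp only [Pi.pow_apply, sq_abs] at hvar
  exact (le_abs_self _).trans (Real.abs_le_sqrt (sub_nonneg.1 hvar))

lemma MeasureTheory.IntegrableOn.intervalIntegrable_of_mem {f : ℝ → ℝ} {a b x y : ℝ}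
    (hf : IntegrableOn f (Ioo a b)) (hx : x ∈ Icc a b) (hy : y ∈ Icc a b) :
    IntervalIntegrable f volume x y :=
  ((Iff.mpr integrableOn_Icc_iff_integrableOn_Ioo hf).mono_set
    (uIcc_subset_Icc hx hy)).intervalIntegrable

lemma aestronglyMeasurable_Ioo_sSup {f : ℝ → ℝ} {a : ℝ} {S : Set ℝ} (hne : S.Nonempty)
    (hbdd : BddAbove S) (hS : ∀ x ∈ S, IntegrableOn f (Ioc a x)) :
    AEStronglyMeasurable f (volume.restrict (Ioo a (sSup S))) := by
  obtain ⟨u, -, hu, huS⟩ := exists_seq_tendsto_sSup hne hbdd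
  have hcover : Ioo a (sSup S) ⊆ ⋃ n, Ioc a (u n) := fun y hy =>
    let ⟨n, hn⟩ := (hu.eventually (lt_mem_nhds hy.2)).exists
    mem_iUnion.2 ⟨n, hy.1, hn.le⟩
  exact (aestronglyMeasurable_iUnion_iff.2 fun n =>
    (hS _ (huS n)).aestronglyMeasurable).mono_set hcover

lemma MemL2.exists_maximal_integrableOn_Ioo {f : ℝ → ℝ} (hf : MemL2 f) :
    ∃ c ∈ Icc (0:ℝ) 1, IntegrableOn f (Ioo 0 c) ∧ ∀ x ∈ Ioc c 1, ¬ IntegrableOn f (Ioc 0 x) := by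
  set S := {x ∈ Icc (0:ℝ) 1 | IntegrableOn f (Ioc 0 x)}
  have h0S : (0:ℝ) ∈ S := mem_sep ⟨le_rfl, zero_le_one⟩ (by simp)
  have hbdd : BddAbove S := ⟨1, fun x hx => hx.1.2⟩
  have hc1 : sSup S ≤ 1 := csSup_le ⟨0, h0S⟩ fun x hx => hx.1.2
  refine ⟨sSup S, ⟨le_csSup hbdd h0S, hc1⟩, ?_, fun x hx hint => ?_⟩
  · exact hf.integrableOn (Ioo_subset_Ioo_right hc1)
      (aestronglyMeasurable_Ioo_sSup ⟨0, h0S⟩ hbdd fun x hx => hx.2)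
  · exact not_le.2 hx.1 (le_csSup hbdd ⟨⟨(le_csSup hbdd h0S).trans hx.1.le, hx.2⟩, hint⟩)

/- `IsH1` asks only for `v'²` to be integrable, so `v'` itself may be non-measurable, with junk
interval integrals past some point `c`; then `v` is constant on `[c, 1]`. -/
theorem IsH1.exists_integrable_deriv {v v' : ℝ → ℝ} (hv : IsH1 v v') :
    ∃ w', IsH1 v w' ∧ IntegrableOn w' (Ioo 0 1) ∧ L2sq w' ≤ L2sq v' := by
  obtain ⟨hftc, hcont, hv2, hv'2⟩ := hv
  obtain ⟨c, ⟨hc0, hc1⟩, hint, hnot⟩ := hv'2.exists_maximal_integrableOn_Ioo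
  set w' := (Ioo 0 c).indicator v'
  have hw'int : IntegrableOn w' (Ioo 0 1) :=
    (hint.integrable_indicator measurableSet_Ioo).integrableOn
  have hw'le : ∀ x, |w' x| ≤ |v' x| := fun x => by
    simpa only [Real.norm_eq_abs] using norm_indicator_le_norm_self v' x
  have hftc_le : ∀ x ∈ Icc (0:ℝ) 1, x ≤ c → v x = v 0 + ∫ s in (0:ℝ)..x, w' s := by
    intro x hx hxc
    rw [hftc x hx]
    congr 1
    refine intervalIntegral.integral_congr_ae ((Measure.ae_ne volume c).mono fun y hyc hy => ?_)
    rw [uIoc_of_le hx.1] at hy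
    exact (indicator_of_mem (show y ∈ Ioo 0 c from
      ⟨hy.1, lt_of_le_of_ne (hy.2.trans hxc) hyc⟩) v').symm
  have hconst : EqOn v (fun _ => v 0) (Ioc c 1) := fun x hx => by
    have hx' : x ∈ Icc (0:ℝ) 1 := ⟨hc0.trans hx.1.le, hx.2⟩
    rw [hftc x hx', intervalIntegral.integral_undef fun h => hnot x hx
      ((intervalIntegrable_iff_integrableOn_Ioc_of_le hx'.1).1 h), add_zero]
  refine ⟨w', ⟨fun x hx => ?_, hcont, hv2, ?_⟩, hw'int, L2sq_le_of_abs_le hv'2 hw'le⟩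
  · rcases le_or_gt x c with hxc | hcx
    · exact hftc_le x hx hxc
    have hvc : v c = v 0 :=
      (hconst.of_subset_closure (hcont.mono (Icc_subset_Icc_left hc0)) continuousOn_const
        Ioc_subset_Icc_self (closure_Ioc (hcx.trans_le hx.2).ne).ge)
        (show c ∈ Icc c 1 from ⟨le_rfl, hc1⟩)
    have htail : ∫ s in c..x, w' s = 0 := by
      rw [intervalIntegral.integral_congr (g := fun _ => 0) fun y hy => ?_,
        intervalIntegral.integral_zero]
      rw [uIcc_of_le hcx.le] at hy
      exact indicator_of_notMem (fun h => not_lt.2 hy.1 h.2) v'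
    rw [hconst ⟨hcx, hx.2⟩, ← intervalIntegral.integral_add_adjacent_intervals
      (hw'int.intervalIntegrable_of_mem ⟨le_rfl, zero_le_one⟩ ⟨hc0, hc1⟩)
      (hw'int.intervalIntegrable_of_mem ⟨hc0, hc1⟩ hx), htail, add_zero,
      ← hftc_le c ⟨hc0, hc1⟩ le_rfl, hvc]
  · exact hv'2.of_abs_le hw'int.aestronglyMeasurable hw'le

lemma isH1_of_hasDerivAt {g g' : ℝ → ℝ} (hg : ∀ x, HasDerivAt g (g' x) x)
    (hg' : Continuous g') : IsH1 g g' := by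
  have hgc : Continuous g := continuous_iff_continuousAt.2 fun x => (hg x).continuousAt
  refine ⟨fun x _ => ?_, hgc.continuousOn, memL2_of_continuousOn hgc.continuousOn,
    memL2_of_continuousOn hg'.continuousOn⟩
  rw [intervalIntegral.integral_eq_sub_of_hasDerivAt (fun y _ => hg y)
    (hg'.intervalIntegrable 0 x)]
  ring

lemma IsH1.sub {f f' g g' : ℝ → ℝ} (hf : IsH1 f f') (hf' : IntegrableOn f' (Ioo 0 1))
    (hg : IsH1 g g') (hg' : IntegrableOn g' (Ioo 0 1)) :
    IsH1 (fun x => f x - g x) (fun x => f' x - g' x) := by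
  have hmeas {u : ℝ → ℝ} (hu : ContinuousOn u (Icc 0 1)) :
      AEStronglyMeasurable u (volume.restrict (Ioo 0 1)) :=
    (hu.mono Ioo_subset_Icc_self).aestronglyMeasurable measurableSet_Ioo
  refine ⟨fun x hx => ?_, hf.2.1.sub hg.2.1, ?_, ?_⟩
  · rw [intervalIntegral.integral_sub
      (hf'.intervalIntegrable_of_mem ⟨le_rfl, zero_le_one⟩ hx)
      (hg'.intervalIntegrable_of_mem ⟨le_rfl, zero_le_one⟩ hx)]
    simp only [hf.1 x hx, hg.1 x hx]
    ring
  · exact hf.2.2.1.sub hg.2.2.1 (hmeas hf.2.1) (hmeas hg.2.1)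
  · exact hf.2.2.2.sub hg.2.2.2 hf'.1 hg'.1

lemma IsH1.abs_sub_le {v v' : ℝ → ℝ} (hv : IsH1 v v') (hv' : IntegrableOn v' (Ioo 0 1))
    {x y : ℝ} (hx : x ∈ Icc 0 1) (hy : y ∈ Icc 0 1) :
    |v x - v y| ≤ ∫ s in Ioo (0:ℝ) 1, |v' s| := by
  have h0 : (0:ℝ) ∈ Icc 0 1 := ⟨le_rfl, zero_le_one⟩
  rw [hv.1 x hx, hv.1 y hy, add_sub_add_left_eq_sub, intervalIntegral.integral_interval_sub_left
    (hv'.intervalIntegrable_of_mem h0 hx) (hv'.intervalIntegrable_of_mem h0 hy),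
    ← integral_Ioc_eq_integral_Ioo]
  refine intervalIntegral.norm_integral_le_integral_norm_uIoc.trans
    (setIntegral_mono_set ?_ (ae_of_all _ fun s => norm_nonneg (v' s)) ?_)
  · exact (Iff.mpr integrableOn_Ioc_iff_integrableOn_Ioo hv').norm
  · exact (Ioc_subset_Ioc (le_inf hy.1 hx.1) (sup_le hy.2 hx.2)).eventuallyLE

lemma IsH1.abs_le_H1norm {v v' : ℝ → ℝ} (hv : IsH1 v v') (hv' : IntegrableOn v' (Ioo 0 1))
    {x : ℝ} (hx : x ∈ Icc 0 1) : |v x| ≤ 2 * H1norm v v' := by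
  have hvint : IntegrableOn v (Ioo 0 1) := hv.2.1.integrableOn_Icc.mono_set Ioo_subset_Icc_self
  set A := ∫ s in Ioo (0:ℝ) 1, |v' s|
  have hpt : ∀ y ∈ Ioo (0:ℝ) 1, |v x| ≤ |v y| + A := fun y hy => by
    linarith [hv.abs_sub_le hv' hx (Ioo_subset_Icc_self hy), abs_sub_abs_le_abs_sub (v x) (v y)]
  calc |v x| = ∫ _ in Ioo (0:ℝ) 1, |v x| := by simp
    _ ≤ ∫ y in Ioo (0:ℝ) 1, (|v y| + A) :=
        setIntegral_mono_on (integrable_const _) (hvint.abs.add (integrable_const _))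
          measurableSet_Ioo hpt
    _ = (∫ y in Ioo (0:ℝ) 1, |v y|) + A := by
        rw [integral_add hvint.abs (integrable_const _)]
        simp
    _ ≤ L2norm v + L2norm v' :=
        add_le_add (integral_abs_le_L2norm hvint hv.2.2.1) (integral_abs_le_L2norm hv' hv.2.2.2)
    _ ≤ 2 * H1norm v v' := by linarith [L2norm_le_H1norm v v', L2norm_deriv_le_H1norm v v']

lemma exists_boundary_lift_pow (α β : ℝ) (n : ℕ) :
    ∃ g g' : ℝ → ℝ, IsH1 g g' ∧ IntegrableOn g' (Ioo 0 1) ∧ g 0 = α ∧ g 1 = β ∧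
      L2sq g ≤ 2 * (α ^ 2 + β ^ 2) / (2 * n + 3) ∧ L2sq g' ≤ 2 * (n + 1) * (α ^ 2 + β ^ 2) := by
  set g := fun x : ℝ => α * (1 - x) ^ (n + 1) + β * x ^ (n + 1)
  set g' := fun x : ℝ => (n + 1) * (β * x ^ n - α * (1 - x) ^ n)
  have hg : ∀ x, HasDerivAt g (g' x) x := fun x => by
    have h := (((hasDerivAt_id x).const_sub 1).pow (n + 1)).const_mul α |>.add
      (((hasDerivAt_id x).pow (n + 1)).const_mul β)
    refine h.congr_deriv ?_
    simp only [g', id, Nat.add_sub_cancel]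
    push_cast
    ring
  have hg'c : Continuous g' := by fun_prop
  have hmem (c : ℝ) (f : ℝ → ℝ) (hf : Continuous f) : MemL2 fun x => c * f x :=
    memL2_of_continuousOn (by fun_prop)
  refine ⟨g, g', isH1_of_hasDerivAt hg hg'c, hg'c.integrableOn_Icc.mono_set Ioo_subset_Icc_self,
    by simp [g], by simp [g], ?_, ?_⟩
  · calc L2sq g ≤ 2 * L2sq (fun x => α * (1 - x) ^ (n + 1)) + 2 * L2sq (fun x => β * x ^ (n + 1)) :=
          L2sq_add_le (hmem _ _ (by fun_prop)) (hmem _ _ (by fun_prop))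
      _ = 2 * (α ^ 2 + β ^ 2) / (2 * n + 3) := by
          rw [L2sq_const_mul, L2sq_const_mul, L2sq_comp_one_sub (fun x => x ^ (n + 1)), L2sq_pow]
          push_cast
          ring
  · have hn : ((n:ℝ) + 1) ^ 2 / (2 * n + 1) ≤ n + 1 := by
      rw [div_le_iff₀ (by positivity)]
      nlinarith
    calc L2sq g' = ((n:ℝ) + 1) ^ 2 * L2sq (fun x => β * x ^ n - α * (1 - x) ^ n) :=
          L2sq_const_mul _ _
      _ ≤ ((n:ℝ) + 1) ^ 2 * (2 * L2sq (fun x => β * x ^ n) + 2 * L2sq (fun x => α * (1 - x) ^ n)) :=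
          mul_le_mul_of_nonneg_left (L2sq_sub_le (hmem _ _ (by fun_prop)) (hmem _ _ (by fun_prop)))
            (by positivity)
      _ = 2 * (α ^ 2 + β ^ 2) * (((n:ℝ) + 1) ^ 2 / (2 * n + 1)) := by
          rw [L2sq_const_mul, L2sq_const_mul, L2sq_comp_one_sub (fun x => x ^ n), L2sq_pow]
          ring
      _ ≤ 2 * (n + 1) * (α ^ 2 + β ^ 2) := by
          nlinarith [mul_le_mul_of_nonneg_left hn (by positivity : (0:ℝ) ≤ 2 * (α ^ 2 + β ^ 2))]

lemma exists_boundary_lift (α β : ℝ) {t : ℝ} (ht0 : 0 < t) (ht1 : t ≤ 1) :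
    ∃ g g' : ℝ → ℝ, IsH1 g g' ∧ IntegrableOn g' (Ioo 0 1) ∧ g 0 = α ∧ g 1 = β ∧
      L2sq g ≤ (α ^ 2 + β ^ 2) * t ∧ t * L2sq g' ≤ 4 * (α ^ 2 + β ^ 2) := by
  set n := ⌊1 / t⌋₊
  have hn1 : 1 < t * (n + 1) := by
    have := Nat.lt_floor_add_one (1 / t)
    rwa [div_lt_iff₀ ht0, mul_comm] at this
  have hn2 : t * n ≤ 1 := by
    have := Nat.floor_le (one_div_pos.2 ht0).le
    rwa [le_div_iff₀ ht0, mul_comm] at this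
  obtain ⟨g, g', hg, hg', hg0, hg1, hgL2, hg'L2⟩ := exists_boundary_lift_pow α β n
  refine ⟨g, g', hg, hg', hg0, hg1, hgL2.trans ?_, ?_⟩
  · rw [div_le_iff₀ (by positivity)]
    nlinarith [sq_nonneg α, sq_nonneg β]
  · nlinarith [mul_le_mul_of_nonneg_left hg'L2 ht0.le, sq_nonneg α, sq_nonneg β]

lemma Kfun_le_of_eq_add {t : ℝ} (ht : 0 ≤ t) {v v₀ v₁ v₁' : ℝ → ℝ}
    (hv : ∀ x, v x = v₀ x + v₁ x) (h₀ : MemL2 v₀) (h₁ : IsH1 v₁ v₁') (h₁0 : v₁ 0 = 0)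
    (h₁1 : v₁ 1 = 0) :
    Kfun t v ≤ L2norm v₀ + t * H1norm v₁ v₁' := by
  refine csInf_le ⟨0, ?_⟩ ⟨v₀, v₁, v₁', hv, h₀, h₁, h₁0, h₁1, rfl⟩
  rintro s ⟨-, -, -, -, -, -, -, -, rfl⟩
  exact add_nonneg (Real.sqrt_nonneg _) (mul_nonneg ht (Real.sqrt_nonneg _))

lemma Kfun_le_L2norm {t : ℝ} (ht : 0 ≤ t) {v : ℝ → ℝ} (hv : MemL2 v) : Kfun t v ≤ L2norm v := by
  have h0 : IsH1 (fun _ => 0) (fun _ => 0) :=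
    isH1_of_hasDerivAt (fun _ => hasDerivAt_const _ _) continuous_const
  simpa [H1norm, L2sq] using Kfun_le_of_eq_add ht (fun x => (add_zero (v x)).symm) hv h0 rfl rfl

lemma sqrt_le_mul_sqrt {a b t : ℝ} (hb : 0 ≤ b) (h : a ≤ b ^ 2 * t) : √a ≤ b * √t :=
  calc √a ≤ √(b ^ 2 * t) := Real.sqrt_le_sqrt h
    _ = b * √t := by rw [Real.sqrt_mul (sq_nonneg b), Real.sqrt_sq hb]

lemma IsH1.Kfun_le_mul_sqrt_of_le_one {v v' : ℝ → ℝ} (hv : IsH1 v v')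
    (hv' : IntegrableOn v' (Ioo 0 1)) {t : ℝ} (ht0 : 0 < t) (ht1 : t ≤ 1) :
    Kfun t v ≤ 13 * H1norm v v' * √t := by
  set N := H1norm v v'
  have hN : 0 ≤ N := Real.sqrt_nonneg _
  have hNsq : L2sq v + L2sq v' = N ^ 2 :=
    (Real.sq_sqrt (add_nonneg (L2sq_nonneg v) (L2sq_nonneg v'))).symm
  have hbdry : v 0 ^ 2 + v 1 ^ 2 ≤ 8 * N ^ 2 := by
    have h0 := hv.abs_le_H1norm hv' (x := 0) ⟨le_rfl, zero_le_one⟩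
    have h1 := hv.abs_le_H1norm hv' (x := 1) ⟨zero_le_one, le_rfl⟩
    nlinarith [sq_abs (v 0), sq_abs (v 1), abs_nonneg (v 0), abs_nonneg (v 1)]
  obtain ⟨g, g', hg, hg', hg0, hg1, hgL2, hg'L2⟩ := exists_boundary_lift (v 0) (v 1) ht0 ht1
  have hgt : L2sq g ≤ 8 * N ^ 2 * t := hgL2.trans (mul_le_mul_of_nonneg_right hbdry ht0.le)
  have hg't : t * L2sq g' ≤ 32 * N ^ 2 := by linarith
  have hrest : L2sq (fun x => v x - g x) + L2sq (fun x => v' x - g' x) ≤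
      2 * N ^ 2 + 2 * L2sq g + 2 * L2sq g' := by
    linarith [L2sq_sub_le hv.2.2.1 hg.2.2.1, L2sq_sub_le hv.2.2.2 hg.2.2.2]
  have hL2 : L2norm g ≤ 3 * N * √t := sqrt_le_mul_sqrt (by positivity) (by nlinarith)
  have hH1 : t * H1norm (fun x => v x - g x) (fun x => v' x - g' x) ≤ 10 * N * √t := by
    conv_lhs => rw [H1norm, ← Real.sqrt_sq ht0.le, ← Real.sqrt_mul (sq_nonneg t)]
    refine sqrt_le_mul_sqrt (by positivity) ?_
    have ht2 : t ^ 2 ≤ t := by nlinarith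
    nlinarith [mul_le_mul_of_nonneg_left hrest (sq_nonneg t), L2sq_nonneg g,
      mul_le_mul_of_nonneg_left hgt (sq_nonneg t)]
  calc Kfun t v ≤ L2norm g + t * H1norm (fun x => v x - g x) (fun x => v' x - g' x) :=
        Kfun_le_of_eq_add ht0.le (fun x => by ring) hg.2.2.1 (hv.sub hv' hg hg')
          (by simp [hg0]) (by simp [hg1])
    _ ≤ 13 * N * √t := by linarith

theorem IsH1.Kfun_le_mul_sqrt {v v' : ℝ → ℝ} (hv : IsH1 v v') {t : ℝ} (ht : 0 < t) :
    Kfun t v ≤ 13 * H1norm v v' * √t := by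
  obtain ⟨w', hw, hw', hw'v'⟩ := hv.exists_integrable_deriv
  have hN : H1norm v w' ≤ H1norm v v' := Real.sqrt_le_sqrt (by linarith)
  rcases le_or_gt t 1 with ht1 | ht1
  · calc Kfun t v ≤ 13 * H1norm v w' * √t := hw.Kfun_le_mul_sqrt_of_le_one hw' ht ht1
      _ ≤ 13 * H1norm v v' * √t := by gcongr
  · have hN0 : 0 ≤ H1norm v v' := Real.sqrt_nonneg _
    calc Kfun t v ≤ L2norm v := Kfun_le_L2norm ht.le hv.2.2.1
      _ ≤ 13 * H1norm v v' * 1 := by linarith [L2norm_le_H1norm v v']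
      _ ≤ 13 * H1norm v v' * √t :=
          mul_le_mul_of_nonneg_left (Real.one_le_sqrt.2 ht1.le) (by positivity)

lemma memHhalf_and_HhalfNorm_le {v : ℝ → ℝ} {C : ℝ} (hK : ∀ t, 0 < t → Kfun t v ≤ C * √t) :
    MemHhalf v ∧ HhalfNorm v ≤ C := by
  have hle : ∀ s ∈ HhalfSet v, s ≤ C := by
    rintro s ⟨t, ht, rfl⟩
    exact (div_le_iff₀ (Real.sqrt_pos.2 ht)).2 (hK t ht)
  exact ⟨⟨C, hle⟩, csSup_le ⟨_, 1, one_pos, rfl⟩ hle⟩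

/-- continuous inclusion `H¹(I) ⊆ H^{1/2,∞}(I)`,
[Lions–Magenes, Ch. 2, §5, Lemma 5.2]: there is `C > 0` such that every `v ∈ H¹(I)`
belongs to `H^{1/2,∞}(I)` with `‖v‖_{1/2,∞} ≤ C ‖v‖_{H¹(I)}`. -/
theorem stmt9 :
    ∃ C : ℝ, 0 < C ∧
      ∀ v v' : ℝ → ℝ, IsH1 v v' →
        MemHhalf v ∧ HhalfNorm v ≤ C * H1norm v v' :=
  ⟨13, by norm_num, fun _ _ hv => memHhalf_and_HhalfNorm_le fun _ ht => hv.Kfun_le_mul_sqrt ht⟩
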